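/- Let V : ℝ^d → ℝ be smooth, let F̃ : ℝ^d → ℝ^d be a smooth vector field, and define ξ_{3/2}(q,g) = √2 ( F̃(q)·g + (1/12) D³V(q)·g^{⊗3} ). Then for every q ∈ ℝ^d: (i) ξ_{3/2}(q,−g) = −ξ_{3/2}(q,g) for all g, and (ii) the vector f_{3/2}(q) := −√2 ∫_{ℝ^d} min(0, ξ_{3/2}(q,g)) g γ_d(dg) equals −( F̃(q) + (1/4) ∇(ΔV)(q) ). Equivalently, −(√2/2) ∫_{ℝ^d} ξ_{3/2}(q,g) g γ_d(dg) = −( F̃(q) + (1/4) ∇(ΔV)(q) ). -/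

import Mathlib

open MeasureTheory Real

noncomputable section

abbrev EucSp (d : ℕ) := EuclideanSpace ℝ (Fin d)

def basisE (d : ℕ) (i : Fin d) : EucSp d := EuclideanSpace.single i 1

def pd {d : ℕ} (f : EucSp d → ℝ) (i : Fin d) : EucSp d → ℝ :=
  fun q => fderiv ℝ f q (basisE d i)

def ZPeriodic {d : ℕ} (f : EucSp d → ℝ) : Prop :=
  ∀ (q : EucSp d) (i : Fin d), f (q + basisE d i) = f q

def cube (d : ℕ) : Set (EucSp d) := {q | ∀ i, 0 ≤ q i ∧ q i < 1}

/-- Density of the standard Gaussian measure `γ_d` on `ℝ^d`. -/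
def gaussD (d : ℕ) (g : EucSp d) : ℝ :=
  (2 * π) ^ (-(d : ℝ) / 2) * Real.exp (-‖g‖ ^ 2 / 2)

def toE {d : ℕ} (v : Fin d → ℝ) : EucSp d := (EuclideanSpace.equiv (Fin d) ℝ).symm v

def pd2 {d : ℕ} (f : EucSp d → ℝ) (i j : Fin d) : EucSp d → ℝ := pd (pd f j) i

def pd3 {d : ℕ} (f : EucSp d → ℝ) (i j k : Fin d) : EucSp d → ℝ := pd (pd2 f j k) i

def lap {d : ℕ} (f : EucSp d → ℝ) : EucSp d → ℝ := fun q => ∑ i, pd2 f i i q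

/-- `ξ_{3/2}(q,g) = √2 ( F̃(q)·g + (1/12) D³V(q)·g^{⊗3} )`. -/
def xi32F {d : ℕ} (V : EucSp d → ℝ) (Ftil : EucSp d → EucSp d) (q g : EucSp d) : ℝ :=
  Real.sqrt 2 *
    ((∑ i, Ftil q i * g i)
      + (1 / 12) * (∑ i, ∑ j, ∑ k, pd3 V i j k q * g i * g j * g k))

open Filter Set

/-- 1D Gaussian moment. -/
def Iv (n : ℕ) : ℝ := ∫ x : ℝ, x ^ n * Real.exp (-x ^ 2 / 2)

lemma exp_half_eq (x : ℝ) : Real.exp (-x ^ 2 / 2) = Real.exp (-(1/2 : ℝ) * x ^ 2) := by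
  ring_nf

lemma int1D (n : ℕ) : Integrable fun x : ℝ => x ^ n * Real.exp (-x ^ 2 / 2) := by
  have h := integrable_rpow_mul_exp_neg_mul_sq (b := 1/2) (by norm_num) (s := (n : ℝ))
    (lt_of_lt_of_le (by norm_num) (Nat.cast_nonneg n))
  simpa [Real.rpow_natCast, exp_half_eq] using h

lemma Iv_zero : Iv 0 = Real.sqrt (2 * π) := by
  have h := integral_gaussian (1/2 : ℝ)
  simp only [Iv, pow_zero, one_mul, exp_half_eq]
  rw [h, show π / (1/2:ℝ) = 2 * π by ring]

lemma Iv_odd (n : ℕ) (hn : Odd n) : Iv n = 0 := by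
  have h := integral_neg_eq_self (fun x : ℝ => x ^ n * Real.exp (-x ^ 2 / 2)) volume
  have h2 : ∀ x : ℝ, (-x) ^ n * Real.exp (-(-x) ^ 2 / 2) = -(x ^ n * Real.exp (-x ^ 2 / 2)) := by
    intro x
    rw [hn.neg_pow]
    ring_nf
  simp only [h2] at h
  rw [integral_neg] at h
  have : Iv n = ∫ x : ℝ, x ^ n * Real.exp (-x ^ 2 / 2) := rfl
  rw [this]
  linarith [h]

lemma tendsto_F (n : ℕ) :
    Tendsto (fun x : ℝ => -(x ^ (n+1) * Real.exp (-x ^ 2 / 2))) (cocompact ℝ) (nhds 0) := by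
  have h := tendsto_rpow_abs_mul_exp_neg_mul_sq_cocompact (a := 1/2) (by norm_num) ((n : ℝ) + 1)
  apply squeeze_zero_norm _ h
  intro x
  have : |x| ^ ((n : ℝ) + 1) = |x| ^ (n + 1) := by
    rw [show ((n : ℝ) + 1) = ((n + 1 : ℕ) : ℝ) by push_cast; ring, Real.rpow_natCast]
  rw [this]
  rw [norm_neg, norm_mul, Real.norm_eq_abs, Real.norm_eq_abs, abs_pow,
    abs_of_pos (Real.exp_pos _), exp_half_eq]

lemma Iv_rec (n : ℕ) : Iv (n + 2) = (n + 1) * Iv n := by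
  set E : ℝ → ℝ := fun x => Real.exp (-x ^ 2 / 2) with hE
  set F : ℝ → ℝ := fun x => -(x ^ (n+1) * E x) with hF
  set f' : ℝ → ℝ := fun x => x ^ (n+2) * E x - (n+1) * (x ^ n * E x) with hf'
  have hderiv : ∀ x : ℝ, HasDerivAt F (f' x) x := by
    intro x
    have hE' : HasDerivAt E (-x * E x) x := by
      have hu : HasDerivAt (fun x : ℝ => -x ^ 2 / 2) (-x) x := by
        have := ((hasDerivAt_pow 2 x).neg).div_const 2
        exact this.congr_deriv (by norm_num; ring)
      simpa [hE, mul_comm] using hu.exp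
    have hp : HasDerivAt (fun x : ℝ => x ^ (n+1)) ((n+1) * x ^ n) x := by
      simpa using hasDerivAt_pow (n+1) x
    have := (hp.mul hE').neg
    refine this.congr_deriv ?_
    simp only [hf']
    ring
  have hf'int : Integrable f' := by
    exact (int1D (n+2)).sub ((int1D n).const_mul _)
  have hF0 : F 0 = 0 := by simp [hF]
  have htop : Tendsto F atTop (nhds 0) :=
    (tendsto_F n).mono_left _root_.atTop_le_cocompact
  have hbot : Tendsto F atBot (nhds 0) :=
    (tendsto_F n).mono_left _root_.atBot_le_cocompact
  have hIoi : ∫ x in Ioi (0:ℝ), f' x = 0 - F 0 := by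
    apply integral_Ioi_of_hasDerivAt_of_tendsto (hderiv 0).continuousAt.continuousWithinAt
      (fun x _ => hderiv x) hf'int.integrableOn htop
  have hIic : ∫ x in Iic (0:ℝ), f' x = F 0 - 0 := by
    apply integral_Iic_of_hasDerivAt_of_tendsto (hderiv 0).continuousAt.continuousWithinAt
      (fun x _ => hderiv x) hf'int.integrableOn hbot
  have htot : ∫ x : ℝ, f' x = 0 := by
    rw [← intervalIntegral.integral_Iic_add_Ioi hf'int.integrableOn hf'int.integrableOn, hIoi, hIic]
    ring
  have hsub : ∫ x : ℝ, f' x = Iv (n+2) - (n+1) * Iv n := by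
    rw [hf']
    rw [integral_sub (int1D (n+2)) ((int1D n).const_mul _), integral_const_mul]
    rfl
  rw [hsub] at htot
  linarith

lemma Iv_two : Iv 2 = Real.sqrt (2 * π) := by
  have := Iv_rec 0
  rw [Iv_zero] at this
  simpa using this

lemma Iv_four : Iv 4 = 3 * Real.sqrt (2 * π) := by
  have := Iv_rec 2
  rw [Iv_two] at this
  rw [this]
  push_cast
  ring

/-- Normalized moments. -/
def Jv (n : ℕ) : ℝ := if n = 0 then 1 else if n = 2 then 1 else if n = 4 then 3 else 0

lemma Iv_eq (n : ℕ) (hn : n ≤ 4) : Iv n = Jv n * Real.sqrt (2 * π) := by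
  interval_cases n
  · rw [Iv_zero]; simp [Jv]
  · rw [Iv_odd 1 ⟨0, by norm_num⟩]; simp [Jv]
  · rw [Iv_two]; simp [Jv]
  · rw [Iv_odd 3 ⟨1, by norm_num⟩]; simp [Jv]
  · rw [Iv_four]; simp [Jv]


variable {d : ℕ}

lemma norm_sq_eq (x : EucSp d) : ‖x‖ ^ 2 = ∑ t, (x t) ^ 2 := by
  rw [EuclideanSpace.norm_eq, Real.sq_sqrt (by positivity)]
  simp [sq_abs]

lemma gauss_split (x : EucSp d) :
    Real.exp (-‖x‖ ^ 2 / 2) = ∏ t, Real.exp (-(x t) ^ 2 / 2) := by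
  rw [← Real.exp_sum]
  congr 1
  rw [norm_sq_eq]
  rw [← Finset.sum_div, ← Finset.sum_neg_distrib]

lemma fun_eq_comp (m : Fin d → ℕ) :
    (fun g : EucSp d => (∏ t, g t ^ m t) * Real.exp (-‖g‖ ^ 2 / 2))
      = (fun y : Fin d → ℝ => ∏ t, (y t ^ m t * Real.exp (-(y t) ^ 2 / 2)))
        ∘ ((MeasurableEquiv.toLp 2 (Fin d → ℝ)).symm) := by
  funext x
  have hx : ∀ t, ((MeasurableEquiv.toLp 2 (Fin d → ℝ)).symm x) t = x t := fun t => rfl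
  simp only [Function.comp_apply, hx, Finset.prod_mul_distrib]
  rw [gauss_split]

lemma intMom (m : Fin d → ℕ) :
    Integrable fun g : EucSp d => (∏ t, g t ^ m t) * Real.exp (-‖g‖ ^ 2 / 2) := by
  have hG : Integrable fun y : Fin d → ℝ => ∏ t, (y t ^ m t * Real.exp (-(y t) ^ 2 / 2)) :=
    Integrable.fintype_prod fun t => int1D (m t)
  have h := ((EuclideanSpace.volume_preserving_symm_measurableEquiv_toLp (Fin d)).integrable_comp_emb
    ((MeasurableEquiv.toLp 2 (Fin d → ℝ)).symm).measurableEmbedding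
    (g := fun y : Fin d → ℝ => ∏ t, (y t ^ m t * Real.exp (-(y t) ^ 2 / 2)))).mpr hG
  rw [fun_eq_comp m]
  exact h

lemma momE (m : Fin d → ℕ) :
    ∫ g : EucSp d, (∏ t, g t ^ m t) * Real.exp (-‖g‖ ^ 2 / 2) = ∏ t, Iv (m t) := by
  have h := (EuclideanSpace.volume_preserving_symm_measurableEquiv_toLp (Fin d)).integral_comp
    ((MeasurableEquiv.toLp 2 (Fin d → ℝ)).symm).measurableEmbedding
    (fun y : Fin d → ℝ => ∏ t, (y t ^ m t * Real.exp (-(y t) ^ 2 / 2)))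
  calc ∫ g : EucSp d, (∏ t, g t ^ m t) * Real.exp (-‖g‖ ^ 2 / 2)
      = ∫ g : EucSp d, ((fun y : Fin d → ℝ => ∏ t, (y t ^ m t * Real.exp (-(y t) ^ 2 / 2)))
          ∘ ((MeasurableEquiv.toLp 2 (Fin d → ℝ)).symm)) g := by rw [← fun_eq_comp m]
    _ = ∫ y : Fin d → ℝ, ∏ t, (y t ^ m t * Real.exp (-(y t) ^ 2 / 2)) := h
    _ = ∏ t, ∫ x : ℝ, x ^ m t * Real.exp (-x ^ 2 / 2) :=
        MeasureTheory.integral_fintype_prod_eq_prod (ι := Fin d)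
          (fun t (x : ℝ) => x ^ m t * Real.exp (-x ^ 2 / 2))
    _ = ∏ t, Iv (m t) := rfl

lemma const_norm (d : ℕ) : ((2 * π) ^ (-(d : ℝ) / 2) : ℝ) * Real.sqrt (2 * π) ^ d = 1 := by
  have h2π : (0 : ℝ) < 2 * π := by positivity
  rw [Real.sqrt_eq_rpow, ← Real.rpow_natCast ((2 * π) ^ ((1 : ℝ) / 2)) d,
    ← Real.rpow_mul h2π.le, ← Real.rpow_add h2π,
    show (-(d:ℝ)/2 + 1/2 * (d:ℝ)) = 0 by ring, Real.rpow_zero]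

lemma normMom (m : Fin d → ℕ) (hm : ∀ t, m t ≤ 4) :
    ∫ g : EucSp d, (∏ t, g t ^ m t) * gaussD d g = ∏ t, Jv (m t) := by
  have hpt : ∀ g : EucSp d, (∏ t, g t ^ m t) * gaussD d g
      = (2 * π) ^ (-(d : ℝ) / 2) * ((∏ t, g t ^ m t) * Real.exp (-‖g‖ ^ 2 / 2)) := by
    intro g; rw [gaussD]; ring
  simp only [hpt]
  rw [integral_const_mul, momE]
  have hprod : ∏ t, Iv (m t) = (∏ t, Jv (m t)) * Real.sqrt (2 * π) ^ d := by
    rw [Finset.prod_congr rfl (fun t _ => Iv_eq (m t) (hm t)), Finset.prod_mul_distrib]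
    simp
  rw [hprod]
  linear_combination (∏ t, Jv (m t)) * const_norm d

lemma prod_pow_ind (g : EucSp d) (i : Fin d) :
    (∏ t, g t ^ (if t = i then 1 else 0)) = g i := by
  have h : ∀ t, g t ^ (if t = i then 1 else 0) = if t = i then g t else 1 := by
    intro t; split_ifs <;> simp
  rw [Finset.prod_congr rfl (fun t _ => h t), Finset.prod_ite_eq']
  simp

lemma pair_eq (g : EucSp d) (i j : Fin d) :
    g i * g j = ∏ t, g t ^ ((if t = i then 1 else 0) + (if t = j then 1 else 0)) := by
  simp only [pow_add, Finset.prod_mul_distrib, prod_pow_ind]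

lemma quad_eq (g : EucSp d) (i j k l : Fin d) :
    g i * g j * g k * g l = ∏ t, g t ^ ((if t = i then 1 else 0) + (if t = j then 1 else 0)
      + (if t = k then 1 else 0) + (if t = l then 1 else 0)) := by
  simp only [pow_add, Finset.prod_mul_distrib, prod_pow_ind]

lemma intg2 (j i : Fin d) : Integrable fun g : EucSp d => g j * g i * gaussD d g := by
  have h := (intMom (m := fun t => (if t = j then 1 else 0) + (if t = i then 1 else 0))).const_mul
    ((2 * π) ^ (-(d : ℝ) / 2))
  apply h.congr
  filter_upwards with g
  rw [← pair_eq, gaussD]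
  ring

lemma intg4 (j k l i : Fin d) :
    Integrable fun g : EucSp d => g j * g k * g l * g i * gaussD d g := by
  have h := (intMom (m := fun t => (if t = j then 1 else 0) + (if t = k then 1 else 0)
    + (if t = l then 1 else 0) + (if t = i then 1 else 0))).const_mul
    ((2 * π) ^ (-(d : ℝ) / 2))
  apply h.congr
  filter_upwards with g
  rw [← quad_eq, gaussD]
  ring

lemma momval2 (j i : Fin d) :
    ∫ g : EucSp d, g j * g i * gaussD d g = if j = i then (1 : ℝ) else 0 := by
  have hfun : (fun g : EucSp d => g j * g i * gaussD d g)
      = fun g => (∏ t, g t ^ ((if t = j then 1 else 0) + (if t = i then 1 else 0))) * gaussD d g :=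
    funext fun g => by rw [← pair_eq]
  rw [hfun, normMom _ (fun t => by split_ifs <;> norm_num)]
  by_cases hji : j = i
  · subst hji
    rw [Finset.prod_eq_one (fun t _ => ?_)]
    · simp
    · by_cases ht : t = j <;> simp [ht, Jv]
  · rw [Finset.prod_eq_zero (Finset.mem_univ j) (by simp [hji, Jv]), if_neg hji]


lemma momval4 (j k l i : Fin d) :
    ∫ g : EucSp d, g j * g k * g l * g i * gaussD d g
      = (if j = k then (1 : ℝ) else 0) * (if l = i then 1 else 0)
        + (if j = l then (1 : ℝ) else 0) * (if k = i then 1 else 0)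
        + (if j = i then (1 : ℝ) else 0) * (if k = l then 1 else 0) := by
  have hfun : (fun g : EucSp d => g j * g k * g l * g i * gaussD d g)
      = fun g => (∏ t, g t ^ ((if t = j then 1 else 0) + (if t = k then 1 else 0)
        + (if t = l then 1 else 0) + (if t = i then 1 else 0))) * gaussD d g :=
    funext fun g => by rw [← quad_eq]
  rw [hfun, normMom _ (fun t => by split_ifs <;> norm_num)]
  by_cases hjk : j = k
  · subst hjk
    by_cases hjl : j = l
    · subst hjl
      by_cases hji : j = i
      · subst hji
        rw [Finset.prod_congr rfl (fun t _ => show Jv _ = if t = j then (3:ℝ) else 1 from by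
          by_cases ht : t = j <;> simp [ht, Jv]), Finset.prod_ite_eq']
        norm_num
      · rw [Finset.prod_eq_zero (Finset.mem_univ j) (by simp [hji, Jv])]
        simp [hji]
    · have hlj : ¬ l = j := fun h => hjl h.symm
      by_cases hli : l = i
      · subst hli
        rw [Finset.prod_eq_one (fun t _ => ?_)]
        · norm_num [hjl]
        · by_cases h1 : t = j
          · simp [h1, hjl, Jv]
          · by_cases h2 : t = l
            · simp [h2, hlj, Jv]
            · simp [h1, h2, Jv]
      · by_cases hji : j = i
        · subst hji
          rw [Finset.prod_eq_zero (Finset.mem_univ j) (by simp [hjl, Jv])]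
          simp [hjl, hli]
        · rw [Finset.prod_eq_zero (Finset.mem_univ l) (by simp [hlj, hli, Jv])]
          simp [hjl, hji, hli]
  · have hkj : ¬ k = j := fun h => hjk h.symm
    by_cases hjl : j = l
    · subst hjl
      by_cases hki : k = i
      · subst hki
        rw [Finset.prod_eq_one (fun t _ => ?_)]
        · norm_num [hjk, hkj]
        · by_cases h1 : t = j
          · simp [h1, hjk, Jv]
          · by_cases h2 : t = k
            · simp [h2, hkj, Jv]
            · simp [h1, h2, Jv]
      · by_cases hji : j = i
        · subst hji
          rw [Finset.prod_eq_zero (Finset.mem_univ j) (by simp [hjk, Jv])]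
          simp [hjk, hki]
        · rw [Finset.prod_eq_zero (Finset.mem_univ k) (by simp [hkj, hki, Jv])]
          simp [hjk, hji, hki]
    · have hlj : ¬ l = j := fun h => hjl h.symm
      by_cases hji : j = i
      · subst hji
        by_cases hkl : k = l
        · subst hkl
          rw [Finset.prod_eq_one (fun t _ => ?_)]
          · norm_num [hjk, hkj]
          · by_cases h1 : t = j
            · simp [h1, hjk, Jv]
            · by_cases h2 : t = k
              · simp [h2, hkj, Jv]
              · simp [h1, h2, Jv]
        · rw [Finset.prod_eq_zero (Finset.mem_univ k) (by simp [hkj, hkl, Jv])]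
          simp [hjk, hjl, hkl]
      · rw [Finset.prod_eq_zero (Finset.mem_univ j) (by simp [hjk, hjl, hji, Jv])]
        simp [hjk, hjl, hji]


section pdlemmas
variable {f V : EucSp d → ℝ}

lemma pd_contDiff (hf : ContDiff ℝ (⊤ : ℕ∞) f) (k : Fin d) : ContDiff ℝ (⊤ : ℕ∞) (pd f k) := by
  have h1 : ContDiff ℝ (⊤ : ℕ∞) (fderiv ℝ f) := hf.fderiv_right (by simp)
  exact (ContinuousLinearMap.apply ℝ ℝ (basisE d k)).contDiff.comp h1

lemma pd2_repr (hf : ContDiff ℝ (⊤ : ℕ∞) f) (a b : Fin d) (q : EucSp d) :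
    pd2 f a b q = fderiv ℝ (fderiv ℝ f) q (basisE d a) (basisE d b) := by
  have hdiff : DifferentiableAt ℝ (fderiv ℝ f) q :=
    ((hf.fderiv_right (m := 1) (by exact WithTop.coe_le_coe.mpr le_top)).differentiable one_ne_zero) q
  have h := fderiv_clm_apply (c := fderiv ℝ f) (u := fun _ => basisE d b)
    hdiff (differentiableAt_const _)
  show fderiv ℝ (fun p => fderiv ℝ f p (basisE d b)) q (basisE d a) = _
  rw [h]
  simp

lemma pd2_symm (hf : ContDiff ℝ (⊤ : ℕ∞) f) (a b : Fin d) (q : EucSp d) :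
    pd2 f a b q = pd2 f b a q := by
  rw [pd2_repr hf, pd2_repr hf]
  exact (hf.contDiffAt.isSymmSndFDerivAt (by simp; exact WithTop.coe_le_coe.mpr le_top)) _ _

lemma pd3_swap23 (hV : ContDiff ℝ (⊤ : ℕ∞) V) (a b c : Fin d) (q : EucSp d) :
    pd3 V a b c q = pd3 V a c b q := by
  unfold pd3
  rw [show pd2 V b c = pd2 V c b from funext fun p => pd2_symm hV b c p]

lemma pd3_swap12 (hV : ContDiff ℝ (⊤ : ℕ∞) V) (a b c : Fin d) (q : EucSp d) :
    pd3 V a b c q = pd3 V b a c q := by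
  show pd2 (pd V c) a b q = pd2 (pd V c) b a q
  exact pd2_symm (pd_contDiff hV c) a b q

lemma pd_lap (hV : ContDiff ℝ (⊤ : ℕ∞) V) (i : Fin d) (q : EucSp d) :
    pd (lap V) i q = ∑ j, pd3 V i j j q := by
  unfold lap pd
  rw [fderiv_fun_sum (A := fun j => pd2 V j j)
    (fun j _ => ((pd_contDiff (pd_contDiff hV j) j).differentiable (by simp)) q)]
  simp only [ContinuousLinearMap.coe_sum', Finset.sum_apply]
  rfl

end pdlemmas

lemma xi_odd (V : EucSp d → ℝ) (Ftil : EucSp d → EucSp d) (q g : EucSp d) :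
    xi32F V Ftil q (-g) = -xi32F V Ftil q g := by
  unfold xi32F
  have hg : ∀ t : Fin d, (-g) t = -(g t) := fun _ => rfl
  simp only [hg, mul_neg, neg_mul, neg_neg, Finset.sum_neg_distrib]
  ring

lemma hproj (t : Fin d) : Continuous fun g : EucSp d => g t := by
  exact (EuclideanSpace.proj (𝕜 := ℝ) t).continuous

lemma xi_cont (V : EucSp d → ℝ) (Ftil : EucSp d → EucSp d) (q : EucSp d) :
    Continuous (xi32F V Ftil q) := by
  unfold xi32F
  refine continuous_const.mul (Continuous.add ?_ (continuous_const.mul ?_))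
  · exact continuous_finset_sum _ fun j _ => continuous_const.mul (hproj j)
  · exact continuous_finset_sum _ fun a _ => continuous_finset_sum _ fun b _ =>
      continuous_finset_sum _ fun c _ =>
        ((continuous_const.mul (hproj a)).mul (hproj b)).mul (hproj c)

lemma gaussD_cont (d : ℕ) : Continuous (gaussD d) := by
  unfold gaussD
  exact continuous_const.mul (Real.continuous_exp.comp
    (((continuous_norm.pow 2).neg).div_const 2))

lemma gaussD_neg (g : EucSp d) : gaussD d (-g) = gaussD d g := by
  simp [gaussD]

section main
variable (V : EucSp d → ℝ) (Ftil : EucSp d → EucSp d) (q : EucSp d) (i : Fin d)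

lemma key_decomp : ∀ g : EucSp d,
    xi32F V Ftil q g * g i * gaussD d g
      = (∑ j, Real.sqrt 2 * Ftil q j * (g j * g i * gaussD d g))
        + ∑ j, ∑ k, ∑ l, (Real.sqrt 2 / 12 * pd3 V j k l q)
            * (g j * g k * g l * g i * gaussD d g) := by
  intro g
  unfold xi32F
  have h1 : Real.sqrt 2 * (∑ j, Ftil q j * g j) * (g i * gaussD d g)
      = ∑ j, Real.sqrt 2 * Ftil q j * (g j * g i * gaussD d g) := by
    rw [Finset.mul_sum, Finset.sum_mul]
    exact Finset.sum_congr rfl fun j _ => by ring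
  have h2 : Real.sqrt 2 / 12 * (∑ j, ∑ k, ∑ l, pd3 V j k l q * g j * g k * g l)
        * (g i * gaussD d g)
      = ∑ j, ∑ k, ∑ l, (Real.sqrt 2 / 12 * pd3 V j k l q)
          * (g j * g k * g l * g i * gaussD d g) := by
    rw [Finset.mul_sum, Finset.sum_mul]
    refine Finset.sum_congr rfl fun j _ => ?_
    rw [Finset.mul_sum, Finset.sum_mul]
    refine Finset.sum_congr rfl fun k _ => ?_
    rw [Finset.mul_sum, Finset.sum_mul]
    exact Finset.sum_congr rfl fun l _ => by ring
  rw [← h1, ← h2]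
  ring

lemma hS1int : Integrable
    (fun g : EucSp d => ∑ j, Real.sqrt 2 * Ftil q j * (g j * g i * gaussD d g)) :=
  integrable_finset_sum _ fun j _ => (intg2 j i).const_mul _

lemma hS2int : Integrable
    (fun g : EucSp d => ∑ j, ∑ k, ∑ l, (Real.sqrt 2 / 12 * pd3 V j k l q)
        * (g j * g k * g l * g i * gaussD d g)) :=
  integrable_finset_sum _ fun j _ => integrable_finset_sum _ fun k _ =>
    integrable_finset_sum _ fun l _ => (intg4 j k l i).const_mul _

lemma hXint : Integrable (fun g : EucSp d => xi32F V Ftil q g * g i * gaussD d g) := by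
  rw [show (fun g : EucSp d => xi32F V Ftil q g * g i * gaussD d g) = _ from
    funext (key_decomp V Ftil q i)]
  exact (hS1int Ftil q i).add (hS2int V q i)

lemma main_int (hV : ContDiff ℝ (⊤ : ℕ∞) V) :
    ∫ g : EucSp d, xi32F V Ftil q g * g i * gaussD d g
      = Real.sqrt 2 * (Ftil q i + (1 / 4) * pd (lap V) i q) := by
  rw [show (fun g : EucSp d => xi32F V Ftil q g * g i * gaussD d g) = _ from
    funext (key_decomp V Ftil q i)]
  rw [integral_add (hS1int Ftil q i) (hS2int V q i)]
  have e1 : (∫ g : EucSp d, ∑ j, Real.sqrt 2 * Ftil q j * (g j * g i * gaussD d g))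
      = Real.sqrt 2 * Ftil q i := by
    rw [integral_finset_sum _ fun j _ => (intg2 j i).const_mul _]
    have : ∀ j : Fin d, (∫ g : EucSp d, Real.sqrt 2 * Ftil q j * (g j * g i * gaussD d g))
        = if j = i then Real.sqrt 2 * Ftil q j else 0 := by
      intro j
      rw [integral_const_mul, momval2]
      split_ifs <;> ring
    rw [Finset.sum_congr rfl fun j _ => this j, Finset.sum_ite_eq']
    simp
  have e2 : (∫ g : EucSp d, ∑ j, ∑ k, ∑ l, (Real.sqrt 2 / 12 * pd3 V j k l q)
        * (g j * g k * g l * g i * gaussD d g))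
      = ∑ j, ∑ k, ∑ l, (Real.sqrt 2 / 12 * pd3 V j k l q)
          * ((if j = k then (1 : ℝ) else 0) * (if l = i then 1 else 0)
            + (if j = l then (1 : ℝ) else 0) * (if k = i then 1 else 0)
            + (if j = i then (1 : ℝ) else 0) * (if k = l then 1 else 0)) := by
    rw [integral_finset_sum _ fun j _ => integrable_finset_sum _ fun k _ =>
      integrable_finset_sum _ fun l _ => (intg4 j k l i).const_mul _]
    refine Finset.sum_congr rfl fun j _ => ?_
    rw [integral_finset_sum _ fun k _ => integrable_finset_sum _ fun l _ =>
      (intg4 j k l i).const_mul _]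
    refine Finset.sum_congr rfl fun k _ => ?_
    rw [integral_finset_sum _ fun l _ => (intg4 j k l i).const_mul _]
    refine Finset.sum_congr rfl fun l _ => ?_
    rw [integral_const_mul, momval4]
  rw [e1, e2]
  -- collapse the triple sum
  have t1 : (∑ j, ∑ k, ∑ l, (Real.sqrt 2 / 12 * pd3 V j k l q)
        * ((if j = k then (1 : ℝ) else 0) * (if l = i then 1 else 0)))
      = ∑ j, Real.sqrt 2 / 12 * pd3 V j j i q := by
    refine Finset.sum_congr rfl fun j _ => ?_
    have hin : ∀ k : Fin d, (∑ l, (Real.sqrt 2 / 12 * pd3 V j k l q)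
        * ((if j = k then (1 : ℝ) else 0) * (if l = i then 1 else 0)))
        = if j = k then Real.sqrt 2 / 12 * pd3 V j k i q else 0 := by
      intro k
      have : ∀ l : Fin d, (Real.sqrt 2 / 12 * pd3 V j k l q)
          * ((if j = k then (1 : ℝ) else 0) * (if l = i then 1 else 0))
          = if l = i then (if j = k then Real.sqrt 2 / 12 * pd3 V j k l q else 0) else 0 := by
        intro l; split_ifs <;> ring
      rw [Finset.sum_congr rfl fun l _ => this l, Finset.sum_ite_eq']
      simp
    rw [Finset.sum_congr rfl fun k _ => hin k, Finset.sum_ite_eq]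
    simp
  have t2 : (∑ j, ∑ k, ∑ l, (Real.sqrt 2 / 12 * pd3 V j k l q)
        * ((if j = l then (1 : ℝ) else 0) * (if k = i then 1 else 0)))
      = ∑ j, Real.sqrt 2 / 12 * pd3 V j i j q := by
    refine Finset.sum_congr rfl fun j _ => ?_
    have hin : ∀ k : Fin d, (∑ l, (Real.sqrt 2 / 12 * pd3 V j k l q)
        * ((if j = l then (1 : ℝ) else 0) * (if k = i then 1 else 0)))
        = if k = i then Real.sqrt 2 / 12 * pd3 V j k j q else 0 := by
      intro k
      have : ∀ l : Fin d, (Real.sqrt 2 / 12 * pd3 V j k l q)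
          * ((if j = l then (1 : ℝ) else 0) * (if k = i then 1 else 0))
          = if j = l then (if k = i then Real.sqrt 2 / 12 * pd3 V j k l q else 0) else 0 := by
        intro l; split_ifs <;> ring
      rw [Finset.sum_congr rfl fun l _ => this l, Finset.sum_ite_eq]
      simp
    rw [Finset.sum_congr rfl fun k _ => hin k, Finset.sum_ite_eq']
    simp
  have t3 : (∑ j, ∑ k, ∑ l, (Real.sqrt 2 / 12 * pd3 V j k l q)
        * ((if j = i then (1 : ℝ) else 0) * (if k = l then 1 else 0)))
      = ∑ k, Real.sqrt 2 / 12 * pd3 V i k k q := by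
    have hout : ∀ j : Fin d, (∑ k, ∑ l, (Real.sqrt 2 / 12 * pd3 V j k l q)
        * ((if j = i then (1 : ℝ) else 0) * (if k = l then 1 else 0)))
        = if j = i then ∑ k, Real.sqrt 2 / 12 * pd3 V j k k q else 0 := by
      intro j
      have hin : ∀ k : Fin d, (∑ l, (Real.sqrt 2 / 12 * pd3 V j k l q)
          * ((if j = i then (1 : ℝ) else 0) * (if k = l then 1 else 0)))
          = if j = i then Real.sqrt 2 / 12 * pd3 V j k k q else 0 := by
        intro k
        have : ∀ l : Fin d, (Real.sqrt 2 / 12 * pd3 V j k l q)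
            * ((if j = i then (1 : ℝ) else 0) * (if k = l then 1 else 0))
            = if k = l then (if j = i then Real.sqrt 2 / 12 * pd3 V j k l q else 0) else 0 := by
          intro l; split_ifs <;> ring
        rw [Finset.sum_congr rfl fun l _ => this l, Finset.sum_ite_eq]
        simp
      rw [Finset.sum_congr rfl fun k _ => hin k]
      split_ifs with h
      · rfl
      · simp
    rw [Finset.sum_congr rfl fun j _ => hout j, Finset.sum_ite_eq']
    simp
  simp only [mul_add, Finset.sum_add_distrib]
  rw [t1, t2, t3]
  -- symmetry of third derivatives
  have s1 : ∀ j : Fin d, pd3 V j j i q = pd3 V i j j q := fun j => by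
    rw [pd3_swap23 hV, pd3_swap12 hV]
  have s2 : ∀ j : Fin d, pd3 V j i j q = pd3 V i j j q := fun j => by
    rw [pd3_swap12 hV]
  have hsum1 : (∑ j, Real.sqrt 2 / 12 * pd3 V j j i q)
      = ∑ j, Real.sqrt 2 / 12 * pd3 V i j j q :=
    Finset.sum_congr rfl fun j _ => by rw [s1 j]
  have hsum2 : (∑ j, Real.sqrt 2 / 12 * pd3 V j i j q)
      = ∑ j, Real.sqrt 2 / 12 * pd3 V i j j q :=
    Finset.sum_congr rfl fun j _ => by rw [s2 j]
  rw [hsum1, hsum2, ← Finset.mul_sum, pd_lap hV]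
  ring

lemma habs_int : Integrable (fun g : EucSp d => |xi32F V Ftil q g| * g i * gaussD d g) := by
  refine Integrable.mono' ((hXint V Ftil q i).abs) ?_ ?_
  · exact (((xi_cont V Ftil q).abs.mul (hproj i)).mul (gaussD_cont d)).aestronglyMeasurable
  · filter_upwards with g
    rw [Real.norm_eq_abs]
    apply le_of_eq
    simp [abs_mul, abs_abs]

lemma zero_abs : ∫ g : EucSp d, |xi32F V Ftil q g| * g i * gaussD d g = 0 := by
  have h := integral_neg_eq_self
    (fun g : EucSp d => |xi32F V Ftil q g| * g i * gaussD d g) volume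
  have h2 : ∀ g : EucSp d, |xi32F V Ftil q (-g)| * (-g) i * gaussD d (-g)
      = -(|xi32F V Ftil q g| * g i * gaussD d g) := by
    intro g
    rw [xi_odd, abs_neg, gaussD_neg, show (-g) i = -(g i) from rfl]
    ring
  simp only [h2] at h
  rw [integral_neg] at h
  linarith

lemma min_int : ∫ g : EucSp d, min 0 (xi32F V Ftil q g) * g i * gaussD d g
    = (∫ g : EucSp d, xi32F V Ftil q g * g i * gaussD d g) / 2 := by
  have hpt : ∀ g : EucSp d, min 0 (xi32F V Ftil q g) * g i * gaussD d g
      = (xi32F V Ftil q g * g i * gaussD d g) / 2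
        - (|xi32F V Ftil q g| * g i * gaussD d g) / 2 := by
    intro g
    rcases le_total 0 (xi32F V Ftil q g) with h | h
    · rw [min_eq_left h, abs_of_nonneg h]; ring
    · rw [min_eq_right h, abs_of_nonpos h]; ring
  simp only [hpt]
  rw [integral_sub ((hXint V Ftil q i).div_const 2) ((habs_int V Ftil q i).div_const 2),
    integral_div, integral_div, zero_abs]
  ring

end main

/-- `ξ_{3/2}` is odd in `g`, and
`−√2 ∫ min(0, ξ_{3/2}(q,g)) g γ_d(dg) = −(F̃(q) + (1/4)∇(ΔV)(q))`;
equivalently `−(√2/2) ∫ ξ_{3/2}(q,g) g γ_d(dg) = −(F̃(q) + (1/4)∇(ΔV)(q))`. -/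
theorem stmt15
    (d : ℕ) (V : EucSp d → ℝ) (Ftil : EucSp d → EucSp d)
    (hV : ContDiff ℝ (⊤ : ℕ∞) V) (hF : ContDiff ℝ (⊤ : ℕ∞) Ftil) :
    ∀ q : EucSp d,
      (∀ g : EucSp d, xi32F V Ftil q (-g) = -xi32F V Ftil q g)
      ∧ (∀ i : Fin d,
          ((-Real.sqrt 2) * ∫ g, min 0 (xi32F V Ftil q g) * g i * gaussD d g)
            = -(Ftil q i + (1 / 4) * pd (lap V) i q))
      ∧ (∀ i : Fin d,
          ((-(Real.sqrt 2) / 2) * ∫ g, xi32F V Ftil q g * g i * gaussD d g)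
            = -(Ftil q i + (1 / 4) * pd (lap V) i q)) := by
  intro q
  have h2 : Real.sqrt 2 * Real.sqrt 2 = 2 := Real.mul_self_sqrt (by norm_num)
  refine ⟨fun g => xi_odd V Ftil q g, fun i => ?_, fun i => ?_⟩
  · rw [min_int V Ftil q i, main_int V Ftil q i hV]
    linear_combination (-(Ftil q i + (1 / 4) * pd (lap V) i q) / 2) * h2
  · rw [main_int V Ftil q i hV]
    linear_combination (-(Ftil q i + (1 / 4) * pd (lap V) i q) / 2) * h2
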